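/- arXiv:0911.3604 — 2 statements merged into one kernel-verified Lean document; each statement's English description precedes it below -/
import Mathlib

section
/- Let c_1, …, c_n be nonnegative even integers with Σ k·c_k = n, and let π be a permutation of [n] with c_k cycles of length k for each k. Then the number of factorizations π = τ ∘ σ where σ and τ are both fixed-point-free involutions equals Π_{k=1}^n (c_k − 1)!! · k^{c_k/2}, with the convention (−1)!! = 1. -/
open Equiv

/-- The number of cycles of length `k` of a permutation of `Fin n`,
counting fixed points as cycles of length 1. -/
def cycleCount {n : ℕ} (π : Equiv.Perm (Fin n)) (k : ℕ) : ℕ :=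
  if k = 1 then (Finset.univ.filter fun x => π x = x).card
  else Multiset.count k π.cycleType

/-!
If `π = τ * σ` with `σ`, `τ` fixed-point-free involutions, then `σ π σ = π⁻¹`, so `σ` maps every
cycle of `π` onto a cycle of the same length, reversing its orientation. It never maps a cycle
onto itself: a reflection of a cycle fixes a point of `σ` or of `τ = π σ`. Hence `σ` is
determined by a fixed-point-free matching of the cycles of each length `k`, which can be chosen in
`(c_k - 1)‼` ways, together with, for each matched pair of cycles, the image of one point of the
first cycle, which can be any of the `k` points of the second one. We count by removing, one at a
time, the pair of cycles through a point `a` and through `σ a`.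
-/

open Finset
open scoped Nat

/-- One step of the count: a cycle of length `K` is matched with one of the other `c K - 1`
cycles of that length, in one of `K` ways. -/
lemma mul_prod_update_sub_two {s : Finset ℕ} {K : ℕ} (hK : K ∈ s) {c : ℕ → ℕ} (hc : 2 ≤ c K) :
    (K * c K - K) * ∏ k ∈ s, (Function.update c K (c K - 2) k - 1)‼ *
        k ^ (Function.update c K (c K - 2) k / 2) =
      ∏ k ∈ s, (c k - 1)‼ * k ^ (c k / 2) := by
  rw [← mul_prod_erase _ _ hK, ← mul_prod_erase _ (fun k => (c k - 1)‼ * k ^ (c k / 2)) hK,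
    ← mul_assoc, Function.update_self,
    prod_congr rfl fun k hk => by rw [Function.update_of_ne (ne_of_mem_erase hk)]]
  congr 1
  obtain ⟨m, hm⟩ : ∃ m, c K = m + 2 := ⟨c K - 2, by omega⟩
  rw [hm, Nat.add_sub_cancel, show m + 2 - 1 = m + 1 by omega, Nat.doubleFactorial_add_one,
    show (m + 2) / 2 = m / 2 + 1 by omega, pow_succ,
    show K * (m + 2) - K = K * (m + 1) by rw [Nat.mul_succ, Nat.add_sub_cancel]]
  ring

namespace Equiv.Perm

variable {α : Type*} {π σ τ : Perm α} {T D E T' : Finset α} {a b x y : α}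

lemma zpow_apply_mem_iff (hT : ∀ x, π x ∈ T ↔ x ∈ T) (i : ℤ) : (π ^ i) x ∈ T ↔ x ∈ T := by
  induction i using Int.induction_on with
  | zero => simp
  | succ i ih => rw [add_comm, zpow_one_add, mul_apply, hT, ih]
  | pred i ih => rw [sub_eq_neg_add, zpow_add, zpow_neg_one, mul_apply, ← ih, ← hT, ← mul_apply,
      mul_inv_cancel, one_apply]

/-- For `T = univ`, these `σ` are exactly the right factors of the factorizations
`π = (π * σ) * σ` into two fixed-point-free involutions (`isReversal_univ_iff`). -/
structure IsReversal (π : Perm α) (T : Finset α) (σ : Perm α) : Prop where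
  apply_of_notMem : ∀ x ∉ T, σ x = x
  involutive : Function.Involutive σ
  apply_apply : ∀ x ∈ T, σ (π x) = π⁻¹ (σ x)
  apply_ne : ∀ x ∈ T, σ x ≠ x
  apply_apply_ne : ∀ x ∈ T, π (σ x) ≠ x

namespace IsReversal

lemma mul_self (hσ : IsReversal π T σ) : σ * σ = 1 :=
  Equiv.ext hσ.involutive

lemma apply_mem (hσ : IsReversal π T σ) (hx : x ∈ T) : σ x ∈ T := by
  by_contra h
  have := hσ.apply_of_notMem _ h
  rw [hσ.involutive x] at this
  exact h (this ▸ hx)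

lemma apply_zpow_apply (hσ : IsReversal π T σ) (hT : ∀ x, π x ∈ T ↔ x ∈ T) (hx : x ∈ T)
    (i : ℤ) : σ ((π ^ i) x) = (π ^ (-i)) (σ x) := by
  induction i using Int.induction_on with
  | zero => simp
  | succ i ih =>
    rw [add_comm, zpow_one_add, mul_apply, hσ.apply_apply _ ((zpow_apply_mem_iff hT _).2 hx),
      ih, neg_add, zpow_add, zpow_neg_one, mul_apply]
  | pred i ih =>
    have h := hσ.apply_apply _ ((zpow_apply_mem_iff hT (-(i : ℤ) - 1)).2 hx)
    rw [← mul_apply π, ← zpow_one_add, add_sub_cancel, ih, eq_inv_iff_eq] at h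
    rw [← h, ← mul_apply, ← zpow_one_add]
    congr 2
    ring

/-- If `σ x = (π ^ m) x`, then `σ` reflects the cycle of `x`, and the reflection fixes a point
of `σ` (`m` even) or of `π * σ` (`m` odd). -/
lemma not_sameCycle_apply (hσ : IsReversal π T σ) (hT : ∀ x, π x ∈ T ↔ x ∈ T) (hx : x ∈ T) :
    ¬ π.SameCycle x (σ x) := by
  rintro ⟨m, hm⟩
  have key (j : ℤ) : σ ((π ^ j) x) = (π ^ (m - j)) x := by
    rw [hσ.apply_zpow_apply hT hx, ← hm, ← mul_apply, ← zpow_add, neg_add_eq_sub]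
  obtain ⟨j, rfl | rfl⟩ := Int.even_or_odd' m
  · apply hσ.apply_ne _ ((zpow_apply_mem_iff hT j).2 hx)
    rw [key]
    congr 2
    ring
  · apply hσ.apply_apply_ne _ ((zpow_apply_mem_iff hT (j + 1)).2 hx)
    rw [key, ← mul_apply π, ← zpow_one_add]
    congr 2
    ring

lemma mul_of_disjoint [DecidableEq α] (hσ : IsReversal π E σ) (hτ : IsReversal π D τ)
    (hDE : _root_.Disjoint D E) (hD : ∀ x, π x ∈ D ↔ x ∈ D) :
    IsReversal π (D ∪ E) (σ * τ) := by
  have hin : ∀ x ∈ D, (σ * τ) x = τ x := fun x hx =>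
    hσ.apply_of_notMem _ (disjoint_left.1 hDE (hτ.apply_mem hx))
  have hout : ∀ x ∉ D, (σ * τ) x = σ x := fun x hx => by
    rw [mul_apply, hτ.apply_of_notMem x hx]
  have hσD : ∀ x ∉ D, σ x ∉ D := by
    intro x hx hσx
    by_cases hxE : x ∈ E
    · exact disjoint_left.1 hDE hσx (hσ.apply_mem hxE)
    · exact hx (hσ.apply_of_notMem x hxE ▸ hσx)
  refine ⟨fun x hx => ?_, fun x => ?_, fun x hx => ?_, fun x hx => ?_, fun x hx => ?_⟩
  · simp only [mem_union, not_or] at hx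
    rw [hout x hx.1, hσ.apply_of_notMem x hx.2]
  · by_cases hx : x ∈ D
    · rw [hin x hx, hin _ (hτ.apply_mem hx), hτ.involutive]
    · rw [hout x hx, hout _ (hσD x hx), hσ.involutive]
  all_goals by_cases hxD : x ∈ D
  · rw [hin _ ((hD x).2 hxD), hin x hxD, hτ.apply_apply x hxD]
  · rw [hout _ (mt (hD x).1 hxD), hout x hxD,
      hσ.apply_apply x ((mem_union.1 hx).resolve_left hxD)]
  · rw [hin x hxD]; exact hτ.apply_ne x hxD
  · rw [hout x hxD]; exact hσ.apply_ne x ((mem_union.1 hx).resolve_left hxD)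
  · rw [hin x hxD]; exact hτ.apply_apply_ne x hxD
  · rw [hout x hxD]; exact hσ.apply_apply_ne x ((mem_union.1 hx).resolve_left hxD)

lemma mul_of_eqOn [DecidableEq α] (hσ : IsReversal π T σ) (hτ : IsReversal π D τ)
    (hD : ∀ x, π x ∈ D ↔ x ∈ D) (hστ : ∀ x ∈ D, σ x = τ x) : IsReversal π (T \ D) (σ * τ) := by
  have hin : ∀ x ∈ D, (σ * τ) x = x := fun x hx => by
    rw [mul_apply, hστ _ (hτ.apply_mem hx), hτ.involutive]
  have hout : ∀ x ∉ D, (σ * τ) x = σ x := fun x hx => by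
    rw [mul_apply, hτ.apply_of_notMem x hx]
  have hσD : ∀ x ∉ D, σ x ∉ D := by
    intro x hx hσx
    have := hτ.apply_mem hσx
    rw [← hστ _ hσx, hσ.involutive] at this
    exact hx this
  refine ⟨fun x hx => ?_, fun x => ?_, fun x hx => ?_, fun x hx => ?_, fun x hx => ?_⟩
  · by_cases hxD : x ∈ D
    · exact hin x hxD
    · rw [hout x hxD, hσ.apply_of_notMem x fun hxT => hx (mem_sdiff.2 ⟨hxT, hxD⟩)]
  · by_cases hx : x ∈ D
    · rw [hin x hx, hin x hx]
    · rw [hout x hx, hout _ (hσD x hx), hσ.involutive]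
  all_goals obtain ⟨hxT, hxD⟩ := mem_sdiff.1 hx
  · rw [hout _ (mt (hD x).1 hxD), hout x hxD, hσ.apply_apply x hxT]
  · rw [hout x hxD]; exact hσ.apply_ne x hxT
  · rw [hout x hxD]; exact hσ.apply_apply_ne x hxT

end IsReversal

lemma isReversal_univ_iff [Fintype α] : IsReversal π univ σ ↔
    (σ * σ = 1 ∧ ∀ x, σ x ≠ x) ∧ (π * σ * (π * σ) = 1 ∧ ∀ x, (π * σ) x ≠ x) := by
  constructor
  · intro hσ
    refine ⟨⟨hσ.mul_self, fun x => hσ.apply_ne x (mem_univ x)⟩,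
      Equiv.ext fun x => ?_, fun x => hσ.apply_apply_ne x (mem_univ x)⟩
    simp only [mul_apply, one_apply, hσ.apply_apply _ (mem_univ _), hσ.involutive x]
    exact π.apply_symm_apply x
  · rintro ⟨⟨hσσ, hσ⟩, hτ, hτfix⟩
    have hinv : Function.Involutive σ := fun x => by rw [← mul_apply, hσσ, one_apply]
    refine ⟨fun x hx => absurd (mem_univ x) hx, hinv, fun x _ => ?_, fun x _ => hσ x,
      fun x _ => hτfix x⟩
    rw [eq_inv_iff_eq]
    simpa only [mul_apply, hinv x, one_apply] using congr($hτ (σ x))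

variable [Fintype α] [DecidableEq α]

def cycleFinset (π : Perm α) (x : α) : Finset α := {y | π.SameCycle x y}

@[simp]
lemma mem_cycleFinset : y ∈ π.cycleFinset x ↔ π.SameCycle x y := by
  simp [cycleFinset]

lemma self_mem_cycleFinset (π : Perm α) (x : α) : x ∈ π.cycleFinset x :=
  mem_cycleFinset.2 SameCycle.rfl

lemma apply_mem_cycleFinset_iff : π y ∈ π.cycleFinset x ↔ y ∈ π.cycleFinset x := by
  simp only [mem_cycleFinset, sameCycle_apply_right]

lemma isCycleOn_cycleFinset (π : Perm α) (x : α) : π.IsCycleOn (π.cycleFinset x) :=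
  ⟨π.bijOn fun _ => apply_mem_cycleFinset_iff,
    fun _ hy _ hz => (mem_cycleFinset.1 hy).symm.trans (mem_cycleFinset.1 hz)⟩

lemma zpow_apply_eq_zpow_apply_iff {i j : ℤ} :
    (π ^ i) x = (π ^ j) x ↔ i ≡ j [ZMOD #(π.cycleFinset x)] :=
  (isCycleOn_cycleFinset π x).zpow_apply_eq_zpow_apply (self_mem_cycleFinset π x)

lemma SameCycle.cycleFinset_eq (h : π.SameCycle x y) : π.cycleFinset x = π.cycleFinset y := by
  ext z
  simp only [mem_cycleFinset]
  exact ⟨h.symm.trans, h.trans⟩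

lemma disjoint_cycleFinset (h : ¬ π.SameCycle x y) :
    _root_.Disjoint (π.cycleFinset x) (π.cycleFinset y) :=
  disjoint_left.2 fun _ hx hy => h ((mem_cycleFinset.1 hx).trans (mem_cycleFinset.1 hy).symm)

lemma cycleFinset_subset (hT : ∀ x, π x ∈ T ↔ x ∈ T) (hx : x ∈ T) : π.cycleFinset x ⊆ T := by
  intro y hy
  obtain ⟨i, rfl⟩ := mem_cycleFinset.1 hy
  exact (zpow_apply_mem_iff hT i).2 hx

lemma card_cycleFinset_eq_one_iff : #(π.cycleFinset x) = 1 ↔ π x = x := by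
  refine ⟨fun h => card_le_one.1 h.le _ (apply_mem_cycleFinset_iff.2 (self_mem_cycleFinset π x))
    _ (self_mem_cycleFinset π x), fun h => card_eq_one.2 ⟨x, ?_⟩⟩
  exact eq_singleton_iff_unique_mem.2 ⟨self_mem_cycleFinset π x,
    fun y hy => ((mem_cycleFinset.1 hy).eq_of_left h).symm⟩

lemma cycleFinset_eq_support_cycleOf (hx : π x ≠ x) :
    π.cycleFinset x = (π.cycleOf x).support := by
  ext y
  rw [mem_support_cycleOf_iff, mem_cycleFinset, mem_support]
  exact (and_iff_left hx).symm

lemma card_filter_card_cycleFinset_eq {k : ℕ} (hk : 2 ≤ k) :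
    #{x | #(π.cycleFinset x) = k} = k * π.cycleType.count k := by
  have hfilter : ({x | #(π.cycleFinset x) = k} : Finset α) =
      {c ∈ π.cycleFactorsFinset | #c.support = k}.biUnion support := by
    ext x
    simp only [mem_filter, mem_univ, true_and, mem_biUnion]
    constructor
    · intro hx
      have hπx : π x ≠ x := fun h => by
        rw [card_cycleFinset_eq_one_iff.2 h] at hx; omega
      rw [cycleFinset_eq_support_cycleOf hπx] at hx
      exact ⟨π.cycleOf x, ⟨cycleOf_mem_cycleFactorsFinset_iff.2 (mem_support.2 hπx), hx⟩,
        mem_support_cycleOf_iff.2 ⟨.rfl, mem_support.2 hπx⟩⟩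
    · rintro ⟨c, ⟨hc, hck⟩, hx⟩
      have hπx : π x ≠ x := mem_support.1 (mem_cycleFactorsFinset_support_le hc hx)
      rwa [cycleFinset_eq_support_cycleOf hπx, ← cycle_is_cycleOf hx hc]
  rw [hfilter, card_biUnion, sum_congr rfl fun c hc => (mem_filter.1 hc).2, sum_const,
    smul_eq_mul, mul_comm, cycleType_def, Multiset.count_map]
  · simp only [Function.comp_apply, eq_comm (a := k)]
    rfl
  · intro c hc d hd hcd
    exact (cycleFactorsFinset_pairwise_disjoint π (mem_filter.1 hc).1 (mem_filter.1 hd).1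
      hcd).disjoint_support

namespace IsReversal

lemma cycleFinset_apply (hσ : IsReversal π T σ) (hT : ∀ x, π x ∈ T ↔ x ∈ T) (hx : x ∈ T) :
    π.cycleFinset (σ x) = (π.cycleFinset x).image σ := by
  ext y
  simp only [mem_cycleFinset, mem_image]
  constructor
  · rintro ⟨i, rfl⟩
    exact ⟨(π ^ (-i)) x, ⟨-i, rfl⟩, by rw [hσ.apply_zpow_apply hT hx, neg_neg]⟩
  · rintro ⟨z, ⟨i, rfl⟩, rfl⟩
    exact ⟨-i, (hσ.apply_zpow_apply hT hx i).symm⟩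

lemma card_cycleFinset_apply (hσ : IsReversal π T σ) (hT : ∀ x, π x ∈ T ↔ x ∈ T) (hx : x ∈ T) :
    #(π.cycleFinset (σ x)) = #(π.cycleFinset x) := by
  rw [hσ.cycleFinset_apply hT hx, card_image_of_injective _ σ.injective]

lemma eqOn_of_apply_eq (hσ : IsReversal π T σ) (hτ : IsReversal π T' τ)
    (hT : ∀ x, π x ∈ T ↔ x ∈ T) (hT' : ∀ x, π x ∈ T' ↔ x ∈ T') (ha : a ∈ T) (ha' : a ∈ T')
    (h : σ a = τ a) : ∀ x ∈ π.cycleFinset a ∪ π.cycleFinset (σ a), σ x = τ x := by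
  have hcycle : ∀ b ∈ T, b ∈ T' → σ b = τ b → ∀ x ∈ π.cycleFinset b, σ x = τ x := by
    intro b hb hb' hσb x hx
    obtain ⟨i, rfl⟩ := mem_cycleFinset.1 hx
    rw [hσ.apply_zpow_apply hT hb, hτ.apply_zpow_apply hT' hb', hσb]
  intro x hx
  rcases mem_union.1 hx with hx | hx
  · exact hcycle a ha ha' h x hx
  · refine hcycle (σ a) (hσ.apply_mem ha) (h ▸ hτ.apply_mem ha') ?_ x hx
    rw [hσ.involutive, h, hτ.involutive]

end IsReversal

/-- The involution exchanging `(π ^ i) a` and `(π ^ (-i)) b` for all `i : ℤ` and fixing every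
other point; it is well defined when the cycles of `a` and `b` are distinct and have the same
length. -/
noncomputable def pairing (π : Perm α) (a b x : α) : α :=
  if h : π.SameCycle a x then (π ^ (-h.choose)) b
  else if h : π.SameCycle b x then (π ^ (-h.choose)) a
  else x

lemma pairing_zpow_apply_left (hK : #(π.cycleFinset a) = #(π.cycleFinset b)) (i : ℤ) :
    pairing π a b ((π ^ i) a) = (π ^ (-i)) b := by
  have h : π.SameCycle a ((π ^ i) a) := ⟨i, rfl⟩
  rw [pairing, dif_pos h, zpow_apply_eq_zpow_apply_iff, ← hK]
  exact (zpow_apply_eq_zpow_apply_iff.1 h.choose_spec).neg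

lemma pairing_zpow_apply_right (hab : ¬ π.SameCycle a b)
    (hK : #(π.cycleFinset a) = #(π.cycleFinset b)) (i : ℤ) :
    pairing π a b ((π ^ i) b) = (π ^ (-i)) a := by
  have h : π.SameCycle b ((π ^ i) b) := ⟨i, rfl⟩
  rw [pairing, dif_neg fun h' => hab (sameCycle_zpow_right.1 h'), dif_pos h,
    zpow_apply_eq_zpow_apply_iff, hK]
  exact (zpow_apply_eq_zpow_apply_iff.1 h.choose_spec).neg

lemma pairing_of_notMem (ha : x ∉ π.cycleFinset a) (hb : x ∉ π.cycleFinset b) :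
    pairing π a b x = x := by
  rw [mem_cycleFinset] at ha hb
  rw [pairing, dif_neg ha, dif_neg hb]

lemma exists_isReversal_apply_eq (hab : ¬ π.SameCycle a b)
    (hK : #(π.cycleFinset a) = #(π.cycleFinset b)) :
    ∃ τ, IsReversal π (π.cycleFinset a ∪ π.cycleFinset b) τ ∧ τ a = b := by
  have hswap : ∀ u v, (u = a ∧ v = b ∨ u = b ∧ v = a) →
      ¬ π.SameCycle u v ∧ ∀ i : ℤ, pairing π a b ((π ^ i) u) = (π ^ (-i)) v := by
    rintro u v (⟨rfl, rfl⟩ | ⟨rfl, rfl⟩)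
    · exact ⟨hab, pairing_zpow_apply_left hK⟩
    · exact ⟨fun h => hab h.symm, pairing_zpow_apply_right hab hK⟩
  have hmem : ∀ x ∈ π.cycleFinset a ∪ π.cycleFinset b, ∃ u v, ∃ i : ℤ,
      (u = a ∧ v = b ∨ u = b ∧ v = a) ∧ x = (π ^ i) u := by
    intro x hx
    rcases mem_union.1 hx with hx | hx <;> obtain ⟨i, rfl⟩ := mem_cycleFinset.1 hx
    exacts [⟨a, b, i, .inl ⟨rfl, rfl⟩, rfl⟩, ⟨b, a, i, .inr ⟨rfl, rfl⟩, rfl⟩]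
  have hinv : Function.Involutive (pairing π a b) := by
    intro x
    by_cases hx : x ∈ π.cycleFinset a ∪ π.cycleFinset b
    · obtain ⟨u, v, i, huv, rfl⟩ := hmem x hx
      rw [(hswap u v huv).2, (hswap v u (huv.symm.imp And.symm And.symm)).2, neg_neg]
    · simp only [mem_union, not_or] at hx
      rw [pairing_of_notMem hx.1 hx.2, pairing_of_notMem hx.1 hx.2]
  refine ⟨hinv.toPerm, ⟨fun x hx => ?_, hinv, fun x hx => ?_, fun x hx => ?_, fun x hx => ?_⟩, ?_⟩
  · simp only [mem_union, not_or] at hx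
    exact pairing_of_notMem hx.1 hx.2
  · obtain ⟨u, v, i, huv, rfl⟩ := hmem x hx
    simp only [Function.Involutive.coe_toPerm]
    rw [← mul_apply, ← zpow_one_add, (hswap u v huv).2, (hswap u v huv).2, ← mul_apply,
      ← zpow_neg_one, ← zpow_add, neg_add, add_comm]
  · obtain ⟨u, v, i, huv, rfl⟩ := hmem x hx
    simp only [Function.Involutive.coe_toPerm, (hswap u v huv).2]
    exact fun h => (hswap u v huv).1
      (sameCycle_zpow_right (n := -i).1 (by rw [h]; exact ⟨i, rfl⟩))
  · obtain ⟨u, v, i, huv, rfl⟩ := hmem x hx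
    simp only [Function.Involutive.coe_toPerm, (hswap u v huv).2]
    exact fun h => (hswap u v huv).1 (sameCycle_zpow_right (n := -i).1
      (sameCycle_apply_right.1 (by rw [h]; exact ⟨i, rfl⟩)))
  · simpa using pairing_zpow_apply_left hK 0

noncomputable def reversals (π : Perm α) (T : Finset α) : Finset (Perm α) := by
  classical exact {σ | IsReversal π T σ}

@[simp]
lemma mem_reversals : σ ∈ reversals π T ↔ IsReversal π T σ := by
  simp [reversals]

lemma reversals_empty : reversals π ∅ = {1} := by
  ext σ
  rw [mem_reversals, mem_singleton]
  refine ⟨fun hσ => Equiv.ext fun x => hσ.apply_of_notMem x (notMem_empty x), ?_⟩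
  rintro rfl
  exact ⟨fun _ _ => rfl, fun _ => rfl, by simp, by simp, by simp⟩

lemma card_reversals_eq_sum (hT : ∀ x, π x ∈ T ↔ x ∈ T) (ha : a ∈ T) :
    #(reversals π T) = ∑ b ∈ {x ∈ T | #(π.cycleFinset x) = #(π.cycleFinset a)} \ π.cycleFinset a,
      #{σ ∈ reversals π T | σ a = b} :=
  card_eq_sum_card_fiberwise fun σ hσ => by
    rw [mem_coe, mem_reversals] at hσ
    exact mem_sdiff.2 ⟨mem_filter.2 ⟨hσ.apply_mem ha, hσ.card_cycleFinset_apply hT ha⟩,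
      fun h => hσ.not_sameCycle_apply hT ha (mem_cycleFinset.1 h)⟩

lemma card_filter_reversals_apply_eq (hT : ∀ x, π x ∈ T ↔ x ∈ T) (ha : a ∈ T) (hb : b ∈ T)
    (hab : ¬ π.SameCycle a b) (hK : #(π.cycleFinset a) = #(π.cycleFinset b)) :
    #{σ ∈ reversals π T | σ a = b} =
      #(reversals π (T \ (π.cycleFinset a ∪ π.cycleFinset b))) := by
  obtain ⟨τ, hτ, hτa⟩ := exists_isReversal_apply_eq hab hK
  have hD (x : α) :
      π x ∈ π.cycleFinset a ∪ π.cycleFinset b ↔ x ∈ π.cycleFinset a ∪ π.cycleFinset b := by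
    simp only [mem_union, apply_mem_cycleFinset_iff]
  have hDT : π.cycleFinset a ∪ π.cycleFinset b ⊆ T :=
    union_subset (cycleFinset_subset hT ha) (cycleFinset_subset hT hb)
  refine card_bij' (fun σ _ => σ * τ) (fun σ _ => σ * τ) (fun σ hσ => ?_) (fun σ hσ => ?_)
    (fun σ _ => by rw [mul_assoc, hτ.mul_self, mul_one])
    (fun σ _ => by rw [mul_assoc, hτ.mul_self, mul_one])
  · obtain ⟨hσ, hσa⟩ := mem_filter.1 hσ
    rw [mem_reversals] at hσ ⊢
    refine hσ.mul_of_eqOn hτ hD ?_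
    have := hσ.eqOn_of_apply_eq hτ hT hD ha (mem_union_left _ (self_mem_cycleFinset π a))
      (hσa.trans hτa.symm)
    rwa [hσa] at this
  · rw [mem_reversals] at hσ
    have hbD : b ∈ π.cycleFinset a ∪ π.cycleFinset b :=
      mem_union_right _ (self_mem_cycleFinset π b)
    have := hσ.mul_of_disjoint hτ disjoint_sdiff hD
    rw [union_sdiff_of_subset hDT] at this
    refine mem_filter.2 ⟨mem_reversals.2 this, ?_⟩
    rw [mul_apply, hτa, hσ.apply_of_notMem b fun h => (mem_sdiff.1 h).2 hbD]

lemma card_filter_card_cycleFinset_sdiff (hab : ¬ π.SameCycle a b)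
    (hK : #(π.cycleFinset a) = #(π.cycleFinset b)) (hDT : π.cycleFinset a ∪ π.cycleFinset b ⊆ T)
    {s : Finset ℕ} {c : ℕ → ℕ} (hc : ∀ k ∈ s, #{x ∈ T | #(π.cycleFinset x) = k} = k * c k)
    {k : ℕ} (hk : k ∈ s) :
    #{x ∈ T \ (π.cycleFinset a ∪ π.cycleFinset b) | #(π.cycleFinset x) = k} =
      k * Function.update c #(π.cycleFinset a) (c #(π.cycleFinset a) - 2) k := by
  have hfilter : {x ∈ T \ (π.cycleFinset a ∪ π.cycleFinset b) | #(π.cycleFinset x) = k} =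
      {x ∈ T | #(π.cycleFinset x) = k} \ (π.cycleFinset a ∪ π.cycleFinset b) := by
    ext x
    simp only [mem_filter, mem_sdiff]
    tauto
  have hlen : ∀ x ∈ π.cycleFinset a ∪ π.cycleFinset b,
      #(π.cycleFinset x) = #(π.cycleFinset a) := by
    intro x hx
    rcases mem_union.1 hx with hx | hx <;> rw [← (mem_cycleFinset.1 hx).cycleFinset_eq, hK]
  rw [hfilter]
  rcases eq_or_ne k #(π.cycleFinset a) with rfl | hka
  · rw [card_sdiff_of_subset fun x hx => mem_filter.2 ⟨hDT hx, hlen x hx⟩, hc _ hk,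
      card_union_of_disjoint (disjoint_cycleFinset hab), ← hK, Function.update_self, Nat.mul_sub,
      mul_two]
  · rw [sdiff_eq_self_of_disjoint, hc k hk, Function.update_of_ne hka]
    exact disjoint_left.2 fun x hx hxD => hka ((mem_filter.1 hx).2 ▸ hlen x hxD)

theorem card_reversals (hT : ∀ x, π x ∈ T ↔ x ∈ T) (c : ℕ → ℕ) (hc_even : ∀ k, Even (c k))
    (hc : ∀ k ∈ Icc 1 (Fintype.card α), #{x ∈ T | #(π.cycleFinset x) = k} = k * c k) :
    #(reversals π T) = ∏ k ∈ Icc 1 (Fintype.card α), (c k - 1)‼ * k ^ (c k / 2) := by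
  induction T using Finset.strongInduction generalizing c with | H T ih =>
  rcases T.eq_empty_or_nonempty with rfl | ⟨a, ha⟩
  · have hc0 (k : ℕ) (hk : k ∈ Icc 1 (Fintype.card α)) : c k = 0 := by
      have := hc k hk
      rw [filter_empty, card_empty, eq_comm, mul_eq_zero] at this
      exact this.resolve_left (by have := (mem_Icc.1 hk).1; omega)
    rw [reversals_empty, card_singleton, eq_comm]
    exact prod_eq_one fun k hk => by simp [hc0 k hk]
  set K := #(π.cycleFinset a) with hK
  have hKmem : K ∈ Icc 1 (Fintype.card α) :=
    mem_Icc.2 ⟨card_pos.2 ⟨a, self_mem_cycleFinset π a⟩, card_le_univ _⟩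
  have hcycle : π.cycleFinset a ⊆ {x ∈ T | #(π.cycleFinset x) = K} := fun x hx =>
    mem_filter.2 ⟨cycleFinset_subset hT ha hx, by rw [← (mem_cycleFinset.1 hx).cycleFinset_eq]⟩
  have hcK : 2 ≤ c K := by
    have hle := card_le_card hcycle
    rw [hc K hKmem, ← hK] at hle
    have hpos : c K ≠ 0 := fun h => by
      rw [h, mul_zero] at hle
      have := (mem_Icc.1 hKmem).1
      omega
    obtain ⟨r, hr⟩ := hc_even K
    omega
  rw [card_reversals_eq_sum hT ha, sum_congr rfl fun b hb => ?_, sum_const, smul_eq_mul,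
    card_sdiff_of_subset hcycle, hc K hKmem, ← hK, mul_prod_update_sub_two hKmem hcK]
  obtain ⟨hbT, hbK⟩ := mem_filter.1 (mem_sdiff.1 hb).1
  have hab : ¬ π.SameCycle a b := fun h => (mem_sdiff.1 hb).2 (mem_cycleFinset.2 h)
  have hDT := union_subset (cycleFinset_subset hT ha) (cycleFinset_subset hT hbT)
  rw [card_filter_reversals_apply_eq hT ha hbT hab hbK.symm]
  refine ih _ (sdiff_ssubset hDT ⟨a, mem_union_left _ (self_mem_cycleFinset π a)⟩)
    (fun x => by simp only [mem_sdiff, mem_union, apply_mem_cycleFinset_iff, hT]) _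
    (fun k => ?_) fun k hk => card_filter_card_cycleFinset_sdiff hab hbK.symm hDT hc hk
  rcases eq_or_ne k K with rfl | hk
  · rw [Function.update_self]
    exact (hc_even _).tsub even_two
  · rw [Function.update_of_ne hk]
    exact hc_even k

lemma card_factorizations_eq_card_reversals : Nat.card {p : Perm α × Perm α //
      (p.1 * p.1 = 1 ∧ ∀ x, p.1 x ≠ x) ∧ (p.2 * p.2 = 1 ∧ ∀ x, p.2 x ≠ x) ∧ π = p.2 * p.1} =
    #(reversals π univ) := by
  have hfactor (σ τ : Perm α) (hσ : σ * σ = 1) : π = τ * σ ↔ π * σ = τ := by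
    rw [eq_mul_inv_iff_mul_eq.symm, inv_eq_of_mul_eq_one_left hσ, eq_comm]
  rw [← Nat.card_eq_finsetCard]
  exact Nat.card_congr
    { toFun := fun p => ⟨p.1.1, mem_reversals.2 (isReversal_univ_iff.2
        ⟨p.2.1, (hfactor _ _ p.2.1.1).1 p.2.2.2 ▸ p.2.2.1⟩)⟩
      invFun := fun σ => ⟨(σ.1, π * σ.1),
        have h := isReversal_univ_iff.1 (mem_reversals.1 σ.2)
        ⟨h.1, h.2, (hfactor _ _ h.1.1).2 rfl⟩⟩
      left_inv := fun p => Subtype.ext (Prod.ext rfl ((hfactor _ _ p.2.1.1).1 p.2.2.2))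
      right_inv := fun σ => rfl }

end Equiv.Perm

lemma card_filter_card_cycleFinset_eq_mul_cycleCount {n : ℕ} (π : Perm (Fin n)) {k : ℕ}
    (hk : 1 ≤ k) : #{x | #(π.cycleFinset x) = k} = k * cycleCount π k := by
  rcases hk.eq_or_lt with rfl | hk
  · simp only [cycleCount, if_pos, one_mul, Perm.card_cycleFinset_eq_one_iff]
  · rw [cycleCount, if_neg hk.ne', Perm.card_filter_card_cycleFinset_eq hk]

theorem factorizations_into_fixed_point_free_involutions_general (n : ℕ) (c : ℕ → ℕ)
    (heven : ∀ k, Even (c k))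
    (π : Equiv.Perm (Fin n)) (hπ : ∀ k ∈ Finset.Icc 1 n, cycleCount π k = c k) :
    Nat.card {p : Equiv.Perm (Fin n) × Equiv.Perm (Fin n) //
      (p.1 * p.1 = 1 ∧ ∀ i, p.1 i ≠ i) ∧ (p.2 * p.2 = 1 ∧ ∀ i, p.2 i ≠ i) ∧
      π = p.2 * p.1} =
    ∏ k ∈ Finset.Icc 1 n, Nat.doubleFactorial (c k - 1) * k ^ (c k / 2) := by
  have hcount (k : ℕ) (hk : k ∈ Icc 1 (Fintype.card (Fin n))) :
      #{x | #(π.cycleFinset x) = k} = k * c k := by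
    rw [Fintype.card_fin] at hk
    rw [card_filter_card_cycleFinset_eq_mul_cycleCount π (mem_Icc.1 hk).1, hπ k hk]
  rw [Perm.card_factorizations_eq_card_reversals]
  simpa only [Fintype.card_fin] using
    Perm.card_reversals (T := univ) (fun _ => iff_of_true (mem_univ _) (mem_univ _)) c heven hcount

/-- If `π` is a permutation of `[n]` with `c k` cycles of length `k`, where all the `c k` are
even and `Σ k·c_k = n`, then the number of factorizations of `π` into two fixed-point-free
involutions is `∏_{k=1}^n (c_k − 1)!! · k^{c_k/2}` (with `(−1)!! = 1`). -/
theorem factorizations_into_fixed_point_free_involutions (n : ℕ) (c : ℕ → ℕ)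
    (heven : ∀ k, Even (c k))
    (hsum : ∑ k ∈ Finset.Icc 1 n, k * c k = n)
    (π : Equiv.Perm (Fin n)) (hπ : ∀ k ∈ Finset.Icc 1 n, cycleCount π k = c k) :
    Nat.card {p : Equiv.Perm (Fin n) × Equiv.Perm (Fin n) //
      (p.1 * p.1 = 1 ∧ ∀ i, p.1 i ≠ i) ∧ (p.2 * p.2 = 1 ∧ ∀ i, p.2 i ≠ i) ∧
      π = p.2 * p.1} =
    ∏ k ∈ Finset.Icc 1 n, Nat.doubleFactorial (c k - 1) * k ^ (c k / 2) :=
  factorizations_into_fixed_point_free_involutions_general n c heven π hπ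
end

section
/- Let σ and τ be involutions of [n] and consider the superposition graph σ ∪ τ. Each connected component of σ ∪ τ that is a path on k vertices corresponds to exactly one cycle of length k in the permutation τ ∘ σ, and each connected component that is a cycle on 2k vertices corresponds to exactly two cycles of length k in τ ∘ σ. In particular, if σ ∪ τ has p path components and q cycle components, then τ ∘ σ has exactly p + 2q cycles. -/
/-
Write `π = τ * σ`. As `σ` and `τ` are involutions, `σ π σ⁻¹ = π⁻¹`, so `σ` maps `π`-cycles
onto `π`-cycles; and as `τ = π σ`, the component of `x` in `σ ∪ τ` is the union of the
`π`-cycles through `x` and through `σ x`. These two cycles coincide exactly when the cycle of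
`x` contains a fixed point of `σ` or of `τ`, i.e. on path components; on a cycle component `σ`
swaps two disjoint cycles, each of which therefore has half the size of the component.
-/

open Equiv

/-- The superposition graph of two involutions. -/
def superGraph {α : Type*} (σ τ : Equiv.Perm α) : SimpleGraph α :=
  SimpleGraph.fromRel (fun x y => σ x = y ∨ τ x = y)

/-- A component of the superposition is a cycle iff none of its vertices is fixed by
either involution; otherwise it is a path. -/
def IsCycleComponent {α : Type*} (σ τ : Equiv.Perm α) (C : (superGraph σ τ).ConnectedComponent) :
    Prop :=
  ∀ x, (superGraph σ τ).connectedComponentMk x = C → σ x ≠ x ∧ τ x ≠ x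

/-- The number of cycles of a permutation, counting fixed points as 1-cycles. -/
def numCycles {n : ℕ} (π : Equiv.Perm (Fin n)) : ℕ :=
  π.cycleFactorsFinset.card + (Finset.univ.filter fun x => π x = x).card

open Equiv Equiv.Perm SimpleGraph Finset

lemma mul_zpow_eq_zpow_neg_mul_of_mul_self_eq_one {G : Type*} [Group G] {a b : G}
    (ha : a * a = 1) (hb : b * b = 1) (k : ℤ) : a * (b * a) ^ k = (b * a) ^ (-k) * a := by
  have ha' : a⁻¹ = a := inv_eq_of_mul_eq_one_right ha
  have hconj : a * (b * a) * a⁻¹ = (b * a)⁻¹ := by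
    rw [mul_inv_rev, ha', inv_eq_of_mul_eq_one_right hb, mul_assoc, mul_assoc, ha, mul_one]
  rw [zpow_neg, ← inv_zpow, ← hconj, conj_zpow, inv_mul_cancel_right]

namespace Equiv.Perm

variable {α : Type*} {σ τ : Perm α} {x y : α}

lemma apply_apply_of_mul_self_eq_one (hσ : σ * σ = 1) (x : α) : σ (σ x) = x :=
  DFunLike.congr_fun hσ x

lemma apply_mul_zpow_apply (hσ : σ * σ = 1) (hτ : τ * τ = 1) (k : ℤ) (x : α) :
    σ (((τ * σ) ^ k) x) = ((τ * σ) ^ (-k)) (σ x) :=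
  DFunLike.congr_fun (mul_zpow_eq_zpow_neg_mul_of_mul_self_eq_one hσ hτ k) x

lemma SameCycle.apply_of_mul_self_eq_one (hσ : σ * σ = 1) (hτ : τ * τ = 1)
    (h : (τ * σ).SameCycle x y) : (τ * σ).SameCycle (σ x) (σ y) := by
  obtain ⟨k, rfl⟩ := h
  exact ⟨-k, (apply_mul_zpow_apply hσ hτ k x).symm⟩

lemma sameCycle_apply_of_fixed (hσ : σ * σ = 1) (h : σ x = x ∨ τ x = x) :
    (τ * σ).SameCycle x (σ x) := by
  rcases h with h | h
  · rw [h]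
  · refine sameCycle_apply_right.1 ?_
    rw [mul_apply, apply_apply_of_mul_self_eq_one hσ, h]

lemma zpow_apply_zpow_apply (π : Perm α) (i j : ℤ) (x : α) :
    (π ^ i) ((π ^ j) x) = (π ^ (i + j)) x := by
  rw [zpow_add, mul_apply]

/-- If `(τ * σ) ^ k x = σ x`, the midpoint of the orbit segment from `x` to `σ x` is fixed
by `σ` when `k` is even and by `τ` when `k` is odd. -/
lemma sameCycle_apply_iff_exists_fixed (hσ : σ * σ = 1) (hτ : τ * τ = 1) :
    (τ * σ).SameCycle x (σ x) ↔
      ∃ y, (τ * σ).SameCycle x y ∧ (σ y = y ∨ τ y = y) := by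
  constructor
  · rintro ⟨k, hk⟩
    obtain ⟨j, rfl | rfl⟩ := Int.even_or_odd' k
    · refine ⟨((τ * σ) ^ j) x, ⟨j, rfl⟩, Or.inl ?_⟩
      rw [apply_mul_zpow_apply hσ hτ, ← hk, zpow_apply_zpow_apply]
      congr 2; ring
    · refine ⟨((τ * σ) ^ (j + 1)) x, ⟨j + 1, rfl⟩, Or.inr ?_⟩
      calc τ (((τ * σ) ^ (j + 1)) x) = (τ * σ) (σ (((τ * σ) ^ (j + 1)) x)) := by
            rw [mul_apply, apply_apply_of_mul_self_eq_one hσ]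
        _ = ((τ * σ) ^ (1 : ℤ)) (((τ * σ) ^ (-(j + 1))) (((τ * σ) ^ (2 * j + 1)) x)) := by
            rw [zpow_one, apply_mul_zpow_apply hσ hτ, hk]
        _ = ((τ * σ) ^ (j + 1)) x := by
            rw [zpow_apply_zpow_apply, zpow_apply_zpow_apply]; congr 2; ring
  · rintro ⟨y, hxy, hy⟩
    exact hxy.trans ((sameCycle_apply_of_fixed hσ hy).trans
      (hxy.apply_of_mul_self_eq_one hσ hτ).symm)

end Equiv.Perm

section superGraph

variable {α : Type*} {σ τ : Perm α} {x y : α}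

lemma superGraph_mk_apply_left (σ τ : Perm α) (x : α) :
    (superGraph σ τ).connectedComponentMk (σ x) = (superGraph σ τ).connectedComponentMk x := by
  by_cases h : σ x = x
  · rw [h]
  · exact (ConnectedComponent.connectedComponentMk_eq_of_adj <|
      (fromRel_adj _ _ _).2 ⟨Ne.symm h, .inl (.inl rfl)⟩).symm

lemma superGraph_mk_apply_right (σ τ : Perm α) (x : α) :
    (superGraph σ τ).connectedComponentMk (τ x) = (superGraph σ τ).connectedComponentMk x := by
  by_cases h : τ x = x
  · rw [h]
  · exact (ConnectedComponent.connectedComponentMk_eq_of_adj <|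
      (fromRel_adj _ _ _).2 ⟨Ne.symm h, .inl (.inr rfl)⟩).symm

lemma Equiv.Perm.SameCycle.superGraph_mk_eq (h : (τ * σ).SameCycle x y) :
    (superGraph σ τ).connectedComponentMk x = (superGraph σ τ).connectedComponentMk y := by
  have hstep : ∀ z, (superGraph σ τ).connectedComponentMk ((τ * σ) z) =
      (superGraph σ τ).connectedComponentMk z := fun z => by
    rw [mul_apply, superGraph_mk_apply_right, superGraph_mk_apply_left]
  obtain ⟨k, rfl⟩ := h
  refine (zpow_induction_left
    (P := fun π : Perm α => (superGraph σ τ).connectedComponentMk (π x) =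
      (superGraph σ τ).connectedComponentMk x)
    (Eq.refl _) (fun π ih => (hstep _).trans ih) (fun π ih => (hstep _).symm.trans ?_) k).symm
  rw [mul_apply (τ * σ)⁻¹, coe_inv, apply_symm_apply, ih]

lemma superGraph_eq_or_eq_of_adj (hσ : σ * σ = 1) (hτ : τ * τ = 1)
    (h : (superGraph σ τ).Adj x y) : y = σ x ∨ y = τ x := by
  obtain ⟨-, (rfl | rfl) | (rfl | rfl)⟩ := (fromRel_adj _ _ _).1 h
  all_goals simp [apply_apply_of_mul_self_eq_one, hσ, hτ]

lemma superGraph_mk_eq_mk_iff (hσ : σ * σ = 1) (hτ : τ * τ = 1) :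
    (superGraph σ τ).connectedComponentMk x = (superGraph σ τ).connectedComponentMk y ↔
      (τ * σ).SameCycle x y ∨ (τ * σ).SameCycle (σ x) y := by
  refine ⟨fun h => ?_, ?_⟩
  · rw [ConnectedComponent.eq] at h
    obtain ⟨w⟩ := h
    induction w with
    | nil => exact .inl (.refl _ _)
    | @cons x z y hxz _ ih =>
      have hσx := apply_apply_of_mul_self_eq_one hσ x
      rcases superGraph_eq_or_eq_of_adj hσ hτ hxz with rfl | rfl
      · rw [hσx] at ih
        exact ih.symm
      · have hτx : τ x = (τ * σ) (σ x) := by rw [mul_apply, hσx]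
        have hστx : σ (τ x) = (τ * σ).symm x := by
          rw [eq_symm_apply, mul_apply, apply_apply_of_mul_self_eq_one hσ,
            apply_apply_of_mul_self_eq_one hτ]
        rw [hστx, sameCycle_symm_apply_left, hτx, sameCycle_apply_left] at ih
        exact ih.symm
  · rintro (h | h)
    · exact h.superGraph_mk_eq
    · exact (superGraph_mk_apply_left σ τ x).symm.trans h.superGraph_mk_eq

end superGraph

section components

variable {α : Type*} {σ τ : Perm α} {x y : α} {C : (superGraph σ τ).ConnectedComponent}

lemma not_isCycleComponent_iff_sameCycle (hσ : σ * σ = 1) (hτ : τ * τ = 1)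
    (hx : (superGraph σ τ).connectedComponentMk x = C) :
    ¬ IsCycleComponent σ τ C ↔ (τ * σ).SameCycle x (σ x) := by
  subst hx
  simp only [IsCycleComponent, not_forall, not_and_or, not_not, exists_prop]
  constructor
  · rintro ⟨y, hy, hfix⟩
    rcases (superGraph_mk_eq_mk_iff hσ hτ).1 hy.symm with h | h
    · exact (sameCycle_apply_iff_exists_fixed hσ hτ).2 ⟨y, h, hfix⟩
    · have h' := (sameCycle_apply_iff_exists_fixed hσ hτ).2 ⟨y, h, hfix⟩
      rw [apply_apply_of_mul_self_eq_one hσ] at h'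
      exact h'.symm
  · intro h
    obtain ⟨y, hxy, hfix⟩ := (sameCycle_apply_iff_exists_fixed hσ hτ).1 h
    exact ⟨y, hxy.superGraph_mk_eq.symm, hfix⟩

lemma superGraph_mk_eq_iff_sameCycle (hσ : σ * σ = 1) (hτ : τ * τ = 1)
    (hC : ¬ IsCycleComponent σ τ C) (hx : (superGraph σ τ).connectedComponentMk x = C) :
    (superGraph σ τ).connectedComponentMk y = C ↔ (τ * σ).SameCycle x y := by
  have hxσx := (not_isCycleComponent_iff_sameCycle hσ hτ hx).1 hC
  rw [← hx, eq_comm, superGraph_mk_eq_mk_iff hσ hτ]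
  exact ⟨fun h => h.elim id hxσx.trans, .inl⟩

lemma image_setOf_sameCycle (hσ : σ * σ = 1) (hτ : τ * τ = 1) (x : α) :
    σ '' {y | (τ * σ).SameCycle x y} = {y | (τ * σ).SameCycle (σ x) y} := by
  ext z
  refine ⟨?_, fun hz => ⟨σ z, ?_, apply_apply_of_mul_self_eq_one hσ z⟩⟩
  · rintro ⟨y, hy, rfl⟩
    exact hy.apply_of_mul_self_eq_one hσ hτ
  · simpa [apply_apply_of_mul_self_eq_one hσ] using hz.apply_of_mul_self_eq_one hσ hτ

lemma ncard_setOf_sameCycle_of_isCycleComponent [Finite α] (hσ : σ * σ = 1) (hτ : τ * τ = 1)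
    (hC : IsCycleComponent σ τ C) (hx : (superGraph σ τ).connectedComponentMk x = C) :
    {y | (τ * σ).SameCycle x y}.ncard =
      {y | (superGraph σ τ).connectedComponentMk y = C}.ncard / 2 := by
  have hsplit : {y | (superGraph σ τ).connectedComponentMk y = C} =
      {y | (τ * σ).SameCycle x y} ∪ {y | (τ * σ).SameCycle (σ x) y} := by
    ext y
    rw [Set.mem_ofPred_eq, ← hx, eq_comm, superGraph_mk_eq_mk_iff hσ hτ]
    rfl
  have hdisj : Disjoint {y | (τ * σ).SameCycle x y} {y | (τ * σ).SameCycle (σ x) y} :=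
    Set.disjoint_left.2 fun _ h₁ h₂ =>
      (not_isCycleComponent_iff_sameCycle hσ hτ hx).2 (h₁.trans h₂.symm) hC
  rw [hsplit, Set.ncard_union_eq hdisj, ← image_setOf_sameCycle hσ hτ,
    Set.ncard_image_of_injective _ σ.injective]
  omega

end components

namespace Equiv.Perm

variable {α : Type*} [Fintype α] [DecidableEq α] {π : Perm α} {x y : α}

def cycleFactorOrFixedPoint (π : Perm α) (x : α) : π.cycleFactorsFinset ⊕ {x // π x = x} :=
  if h : π x = x then .inr ⟨x, h⟩
  else .inl ⟨π.cycleOf x, cycleOf_mem_cycleFactorsFinset_iff.2 (mem_support.2 h)⟩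

lemma cycleFactorOrFixedPoint_eq_iff :
    cycleFactorOrFixedPoint π x = cycleFactorOrFixedPoint π y ↔ π.SameCycle x y := by
  by_cases hx : π x = x <;> by_cases hy : π y = y <;>
    simp only [cycleFactorOrFixedPoint, hx, hy, dite_true, dite_false, Sum.inl.injEq,
      Sum.inr.injEq, reduceCtorEq, Subtype.mk.injEq, false_iff]
  · exact ⟨fun h => h ▸ .refl _ _, fun h => h.eq_of_left hx⟩
  · exact fun h => hy (h.eq_of_left hx ▸ hx)
  · exact fun h => hx (h.eq_of_right hy ▸ hy)
  · exact (sameCycle_iff_cycleOf_eq_of_mem_support (mem_support.2 hx) (mem_support.2 hy)).symm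

lemma cycleFactorOrFixedPoint_surjective (π : Perm α) :
    Function.Surjective (cycleFactorOrFixedPoint π) := by
  rintro (⟨c, hc⟩ | ⟨x, hx⟩)
  · obtain ⟨a, ha⟩ := (mem_cycleFactorsFinset_iff.1 hc).1.nonempty_support
    have hπa : π a ≠ a := mem_support.1 (mem_cycleFactorsFinset_support_le hc ha)
    refine ⟨a, ?_⟩
    simp only [cycleFactorOrFixedPoint, hπa, dite_false, cycle_is_cycleOf ha hc]
  · exact ⟨x, by simp only [cycleFactorOrFixedPoint, hx, dite_true]⟩

lemma nat_card_quotient_sameCycle (π : Perm α) :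
    Nat.card (Quotient (SameCycle.setoid π)) = #π.cycleFactorsFinset + #{x | π x = x} := by
  have hker : SameCycle.setoid π = Setoid.ker (cycleFactorOrFixedPoint π) :=
    Setoid.ext fun _ _ => cycleFactorOrFixedPoint_eq_iff.symm
  rw [hker, Nat.card_congr (Setoid.quotientKerEquivOfSurjective _
    (cycleFactorOrFixedPoint_surjective π)), Nat.card_sum, Nat.card_eq_fintype_card,
    Nat.card_eq_fintype_card, Fintype.card_coe, Fintype.card_subtype]

end Equiv.Perm

section fibers

variable {α : Type*} {σ τ : Perm α} {C : (superGraph σ τ).ConnectedComponent}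

def componentOfCycle (σ τ : Perm α) :
    Quotient (SameCycle.setoid (τ * σ)) → (superGraph σ τ).ConnectedComponent :=
  Quotient.lift (superGraph σ τ).connectedComponentMk fun _ _ h => h.superGraph_mk_eq

lemma nat_card_componentOfCycle_fiber_of_not_isCycleComponent (hσ : σ * σ = 1)
    (hτ : τ * τ = 1) (hC : ¬ IsCycleComponent σ τ C) :
    Nat.card {c // componentOfCycle σ τ c = C} = 1 := by
  obtain ⟨x, hx⟩ := C.exists_rep
  refine Nat.card_eq_one_iff_exists.2 ⟨⟨⟦x⟧, hx⟩, ?_⟩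
  rintro ⟨c, hc⟩
  induction c using Quotient.inductionOn with
  | h y =>
    exact Subtype.ext (Quotient.sound ((superGraph_mk_eq_iff_sameCycle hσ hτ hC hx).1 hc).symm)

lemma nat_card_componentOfCycle_fiber_of_isCycleComponent (hσ : σ * σ = 1)
    (hτ : τ * τ = 1) (hC : IsCycleComponent σ τ C) :
    Nat.card {c // componentOfCycle σ τ c = C} = 2 := by
  obtain ⟨x, hx⟩ := C.exists_rep
  refine Nat.card_eq_two_iff.2
    ⟨⟨⟦x⟧, hx⟩, ⟨⟦σ x⟧, (superGraph_mk_apply_left σ τ x).trans hx⟩, fun h => ?_, ?_⟩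
  · exact (not_isCycleComponent_iff_sameCycle hσ hτ hx).2
      (Quotient.exact (congrArg Subtype.val h)) hC
  · refine Set.eq_univ_iff_forall.2 fun ⟨c, hc⟩ => ?_
    induction c using Quotient.inductionOn with
    | h y =>
      rcases (superGraph_mk_eq_mk_iff hσ hτ).1 (hx.trans hc.symm) with h | h
      · exact .inl (Subtype.ext (Quotient.sound h.symm))
      · exact .inr (Subtype.ext (Quotient.sound h.symm))

lemma nat_card_quotient_sameCycle_mul [Finite α] (hσ : σ * σ = 1) (hτ : τ * τ = 1) :
    Nat.card (Quotient (SameCycle.setoid (τ * σ))) =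
      Nat.card {C : (superGraph σ τ).ConnectedComponent // ¬ IsCycleComponent σ τ C} +
      2 * Nat.card {C : (superGraph σ τ).ConnectedComponent // IsCycleComponent σ τ C} := by
  classical
  have : Fintype (superGraph σ τ).ConnectedComponent := Fintype.ofFinite _
  calc Nat.card (Quotient (SameCycle.setoid (τ * σ)))
      = ∑ C, Nat.card {c // componentOfCycle σ τ c = C} := by
        rw [← Nat.card_congr (Equiv.sigmaFiberEquiv (componentOfCycle σ τ)), Nat.card_sigma]
    _ = ∑ C, if IsCycleComponent σ τ C then 2 else 1 := by
        refine sum_congr rfl fun C _ => ?_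
        split_ifs with hC
        exacts [nat_card_componentOfCycle_fiber_of_isCycleComponent hσ hτ hC,
          nat_card_componentOfCycle_fiber_of_not_isCycleComponent hσ hτ hC]
    _ = _ := by
        rw [sum_ite, sum_const, sum_const, smul_eq_mul, smul_eq_mul, Nat.card_eq_fintype_card,
          Nat.card_eq_fintype_card, Fintype.card_subtype, Fintype.card_subtype]
        ring

end fibers

/-- Each path component of `σ ∪ τ` on `k` vertices yields a single `k`-cycle of `τ ∘ σ`,
each cycle component on `2k` vertices yields two `k`-cycles, and if there are `p` path
components and `q` cycle components then `τ ∘ σ` has `p + 2q` cycles. -/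
theorem superposition_components_vs_cycles (n : ℕ) (σ τ : Equiv.Perm (Fin n))
    (hσ : σ * σ = 1) (hτ : τ * τ = 1) :
    (∀ C : (superGraph σ τ).ConnectedComponent, ¬ IsCycleComponent σ τ C →
      (∀ x y, (superGraph σ τ).connectedComponentMk x = C →
        (superGraph σ τ).connectedComponentMk y = C → (τ * σ).SameCycle x y) ∧
      (∀ x y, (superGraph σ τ).connectedComponentMk x = C → (τ * σ).SameCycle x y →
        (superGraph σ τ).connectedComponentMk y = C)) ∧
    (∀ C : (superGraph σ τ).ConnectedComponent, IsCycleComponent σ τ C →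
      ∃ a b : Fin n, (superGraph σ τ).connectedComponentMk a = C ∧
        (superGraph σ τ).connectedComponentMk b = C ∧
        ¬ (τ * σ).SameCycle a b ∧
        (∀ x, (superGraph σ τ).connectedComponentMk x = C →
          (τ * σ).SameCycle a x ∨ (τ * σ).SameCycle b x) ∧
        (∀ x y, (superGraph σ τ).connectedComponentMk x = C → (τ * σ).SameCycle x y →
          (superGraph σ τ).connectedComponentMk y = C) ∧
        Set.ncard {x | (τ * σ).SameCycle a x} =
          Set.ncard {x | (superGraph σ τ).connectedComponentMk x = C} / 2 ∧
        Set.ncard {x | (τ * σ).SameCycle b x} =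
          Set.ncard {x | (superGraph σ τ).connectedComponentMk x = C} / 2) ∧
    numCycles (τ * σ) =
      Nat.card {C : (superGraph σ τ).ConnectedComponent // ¬ IsCycleComponent σ τ C} +
      2 * Nat.card {C : (superGraph σ τ).ConnectedComponent // IsCycleComponent σ τ C} := by
  refine ⟨fun C hC => ?_, fun C hC => ?_, ?_⟩
  · exact ⟨fun x y hx hy => (superGraph_mk_eq_iff_sameCycle hσ hτ hC hx).1 hy,
      fun x y hx hxy => (superGraph_mk_eq_iff_sameCycle hσ hτ hC hx).2 hxy⟩
  · obtain ⟨x, hx⟩ := C.exists_rep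
    have hσx := (superGraph_mk_apply_left σ τ x).trans hx
    exact ⟨x, σ x, hx, hσx, fun h => (not_isCycleComponent_iff_sameCycle hσ hτ hx).2 h hC,
      fun y hy => (superGraph_mk_eq_mk_iff hσ hτ).1 (hx.trans hy.symm),
      fun y z hy hyz => hyz.superGraph_mk_eq.symm.trans hy,
      ncard_setOf_sameCycle_of_isCycleComponent hσ hτ hC hx,
      ncard_setOf_sameCycle_of_isCycleComponent hσ hτ hC hσx⟩
  · rw [numCycles, ← nat_card_quotient_sameCycle, nat_card_quotient_sameCycle_mul hσ hτ]
end
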